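/- arXiv:1206.6227 — 4 statements merged into one kernel-verified Lean document; each statement's English description precedes it below -/
import Mathlib

section
/- Let (S, 𝒮) be a measurable space with measurable diagonal Δ ∈ 𝒮 ⊗ 𝒮 and let ℋ ⊆ 𝒮 be a semiring generating 𝒮. Then ℋ is self-dissecting. -/
/-!
A measurable diagonal lies in the σ-algebra generated by countably many rectangles with sides
in `H`, so countably many sets `t 0, t 1, …` of `H` separate the points of `S`. Given `A ∈ H`,
the semiring property cuts `A` into finitely many sets of `H`, none of which is split by any of
`t 0, …, t (n - 1)`; numbering the parts of these partitions through `ℕ` gives a dissecting system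
of `A`. The partitions need not refine one another: each of them covers `A`.
-/

/-- A dissecting system for `A ⊆ S` (Leadbetter): nested partitions of increasing
subsets exhausting `A` that eventually separate any two distinct points of `A`. -/
def IsDissectingSystem {S : Type*} (A : Set S) (I : ℕ → Set ℕ) (B : ℕ → ℕ → Set S) : Prop :=
  (∀ n, ∀ k ∈ I n, B n k ⊆ A) ∧
  (∀ n, (I n).PairwiseDisjoint (B n)) ∧
  (∀ n, (⋃ k ∈ I n, B n k) ⊆ ⋃ k ∈ I (n + 1), B (n + 1) k) ∧
  ((⋃ n, ⋃ k ∈ I n, B n k) = A) ∧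
  (∀ x ∈ A, ∀ y ∈ A, x ≠ y →
    ∃ N, ∀ n ≥ N, ∃ k ∈ I n, Xor' (x ∈ B n k) (y ∈ B n k))

/-- A family `ℰ` is self-dissecting if every `A ∈ ℰ` admits a dissecting system
consisting of sets from `ℰ`. -/
def SelfDissecting {S : Type*} (E : Set (Set S)) : Prop :=
  E.Nonempty ∧ ∀ A ∈ E, ∃ I B, IsDissectingSystem A I B ∧ ∀ n, ∀ k ∈ I n, B n k ∈ E

open MeasurableSpace MeasureTheory Set

namespace MeasurableSpace

theorem exists_countable_subset_measurableSet_generateFrom {α : Type*} {C : Set (Set α)}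
    {s : Set α} (hs : MeasurableSet[generateFrom C] s) :
    ∃ D ⊆ C, D.Countable ∧ MeasurableSet[generateFrom D] s := by
  induction hs with
  | basic u hu => exact ⟨{u}, singleton_subset_iff.2 hu, countable_singleton u, .basic u rfl⟩
  | empty => exact ⟨∅, empty_subset C, countable_empty, @MeasurableSet.empty _ (generateFrom ∅)⟩
  | compl u _ ih =>
    obtain ⟨D, hDC, hD, hu⟩ := ih
    exact ⟨D, hDC, hD, hu.compl⟩
  | iUnion f _ ih =>
    choose D hDC hD hf using ih
    exact ⟨⋃ n, D n, iUnion_subset hDC, countable_iUnion hD,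
      .iUnion fun n => generateFrom_mono (subset_iUnion D n) _ (hf n)⟩

end MeasurableSpace

theorem hasCountableSeparatingOn_of_measurableSet_diagonal {S : Type*} [MeasurableSpace S]
    {H : Set (Set S)} (hgen : generateFrom H = ‹MeasurableSpace S›)
    (hΔ : MeasurableSet {p : S × S | p.1 = p.2}) :
    HasCountableSeparatingOn S (· ∈ H) univ := by
  have hprod : (Prod.instMeasurableSpace : MeasurableSpace (S × S)) =
      generateFrom (preimage Prod.fst '' H ∪ preimage Prod.snd '' H) := by
    rw [← generateFrom_sup_generateFrom, ← comap_generateFrom, ← comap_generateFrom, hgen]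
    rfl
  rw [hprod] at hΔ
  obtain ⟨D, hDH, hDc, hΔD⟩ := exists_countable_subset_measurableSet_generateFrom hΔ
  have hD : ∀ d ∈ D, ∃ h ∈ H, d = Prod.fst ⁻¹' h ∨ d = Prod.snd ⁻¹' h := by
    intro d hd
    rcases hDH hd with ⟨h, hh, rfl⟩ | ⟨h, hh, rfl⟩
    exacts [⟨h, hh, .inl rfl⟩, ⟨h, hh, .inr rfl⟩]
  choose! φ hφH hφ using hD
  refine ⟨φ '' D, hDc.image φ, forall_mem_image.2 hφH, fun x _ y _ hxy => ?_⟩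
  -- `(x, x)` and `(x, y)` lie in the same generators, hence both on the diagonal
  have hsame : ∀ d ∈ D, (x, x) ∈ d ↔ (x, y) ∈ d := by
    intro d hd
    rcases hφ d hd with h | h <;> rw [h]
    exacts [Iff.rfl, hxy _ (mem_image_of_mem φ hd)]
  exact (forall_generateFrom_mem_iff_mem_iff.2 hsame _ hΔD).1 rfl

namespace MeasureTheory.IsSetSemiring

variable {α : Type*} {C : Set (Set α)} {s : Set α}

theorem exists_finpartition_subset_or_disjoint (hC : IsSetSemiring C) (hs : s ∈ C)
    {t : Set α} (ht : t ∈ C) :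
    ∃ P : Finpartition s, ↑P.parts ⊆ C ∧ ∀ u ∈ P.parts, u ⊆ t ∨ Disjoint u t := by
  classical
  have hst := hC.inter_mem s hs t ht
  have hQ : (insert (s ∩ t) (hC.disjointOfDiff hs hst)).sup id = s := by
    rw [Finset.sup_id_set_eq_sUnion, Finset.coe_insert,
      hC.sUnion_insert_disjointOfDiff hs hst inter_subset_left]
  have hQdisj := Finset.coe_insert (s ∩ t) (hC.disjointOfDiff hs hst) ▸
    hC.pairwiseDisjoint_insert_disjointOfDiff hs hst
  refine ⟨.ofErase _ (Finset.supIndep_iff_pairwiseDisjoint.2 hQdisj) hQ,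
    fun u hu => ?_, fun u hu => ?_⟩
  all_goals
    obtain rfl | hu := Finset.mem_insert.1 (Finset.mem_of_mem_erase hu)
  · exact hst
  · exact hC.subset_disjointOfDiff hs hst hu
  · exact .inl inter_subset_right
  · refine .inr (Disjoint.mono_left (b := s \ t) ?_ disjoint_sdiff_left)
    rw [← sdiff_self_inter, ← hC.sUnion_disjointOfDiff hs hst]
    exact subset_sUnion_of_mem hu

theorem exists_finpartition_forall_subset_or_disjoint (hC : IsSetSemiring C) (hs : s ∈ C)
    (T : Finset (Set α)) (hT : ↑T ⊆ C) :
    ∃ P : Finpartition s, ↑P.parts ⊆ C ∧ ∀ u ∈ P.parts, ∀ t ∈ T, u ⊆ t ∨ Disjoint u t := by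
  classical
  induction T using Finset.induction_on with
  | empty =>
    refine ⟨⊤, fun u hu => ?_, by simp⟩
    rwa [Finset.mem_singleton.1 (Finpartition.parts_top_subset s hu)]
  | insert t T _ ih =>
    rw [Finset.coe_insert, insert_subset_iff] at hT
    obtain ⟨P, hPC, hPT⟩ := ih hT.2
    choose Q hQC hQt using fun u (hu : u ∈ P.parts) =>
      hC.exists_finpartition_subset_or_disjoint (hPC hu) hT.1
    refine ⟨P.bind Q, fun v hv => ?_, fun v hv => ?_⟩
    all_goals obtain ⟨u, hu, hv⟩ := Finpartition.mem_bind.1 hv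
    · exact hQC u hu hv
    · have hvu : v ⊆ u := (Q u hu).le hv
      rintro t' ht'
      obtain rfl | ht' := Finset.mem_insert.1 ht'
      · exact hQt u hu v hv
      · exact (hPT u hu t' ht').imp hvu.trans (Disjoint.mono_left hvu)

end MeasureTheory.IsSetSemiring

theorem Finpartition.sUnion_parts {α : Type*} {A : Set α} (P : Finpartition A) :
    ⋃₀ (P.parts : Set (Set α)) = A :=
  (Finset.sup_id_set_eq_sUnion _).symm.trans P.sup_parts

theorem Finpartition.exists_xor_mem_of_subset_or_disjoint {α : Type*} {A t : Set α}
    (P : Finpartition A) (hP : ∀ u ∈ P.parts, u ⊆ t ∨ Disjoint u t) {x y : α} (hx : x ∈ A)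
    (hxy : ¬(x ∈ t ↔ y ∈ t)) : ∃ u ∈ P.parts, Xor (x ∈ u) (y ∈ u) := by
  rw [← P.sUnion_parts] at hx
  obtain ⟨u, hu, hxu⟩ := hx
  refine ⟨u, hu, .inl ⟨hxu, fun hyu => hxy ?_⟩⟩
  rcases hP u hu with hut | hut
  · exact iff_of_true (hut hxu) (hut hyu)
  · exact iff_of_false (disjoint_left.1 hut hxu) (disjoint_left.1 hut hyu)

theorem exists_isDissectingSystem_of_finpartition {α : Type*} {A : Set α}
    (P : ℕ → Finpartition A)
    (hsep : ∀ x ∈ A, ∀ y ∈ A, x ≠ y →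
      ∃ N, ∀ n ≥ N, ∃ u ∈ (P n).parts, Xor (x ∈ u) (y ∈ u)) :
    ∃ I B, IsDissectingSystem A I B ∧ ∀ n, ∀ k ∈ I n, B n k ∈ (P n).parts := by
  -- one injection `φ` into `ℕ` numbers the parts of all levels at once
  set 𝒞 := ⋃ n, ((P n).parts : Set (Set α))
  obtain ⟨φ, hφ⟩ := countable_iff_exists_injOn.1
    (countable_iUnion fun n => (P n).parts.countable_toSet : 𝒞.Countable)
  have hψ : ∀ n, ∀ u ∈ (P n).parts, Function.invFunOn φ 𝒞 (φ u) = u := fun n u hu =>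
    hφ.leftInvOn_invFunOn (mem_iUnion_of_mem n hu)
  have hU : ∀ n, ⋃ k ∈ φ '' (P n).parts, Function.invFunOn φ 𝒞 k = A := fun n => by
    rw [biUnion_image]
    exact (iUnion₂_congr (hψ n)).trans (sUnion_eq_biUnion.symm.trans (P n).sUnion_parts)
  refine ⟨fun n => φ '' (P n).parts, fun _ => Function.invFunOn φ 𝒞,
    ⟨fun n k hk => hU n ▸ subset_biUnion_of_mem hk, ?_,
      fun n => ((hU n).trans (hU (n + 1)).symm).le, by simp only [hU, iUnion_const],
      fun x hx y hy hxy => ?_⟩, ?_⟩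
  · rintro n _ ⟨u, hu, rfl⟩ _ ⟨v, hv, rfl⟩ huv
    simp only [Function.onFun, hψ n u hu, hψ n v hv]
    exact (P n).disjoint hu hv (ne_of_apply_ne φ huv)
  · obtain ⟨N, hN⟩ := hsep x hx y hy hxy
    refine ⟨N, fun n hn => ?_⟩
    obtain ⟨u, hu, hxyu⟩ := hN n hn
    exact ⟨φ u, mem_image_of_mem φ hu, by simp only [hψ n u hu]; exact hxyu⟩
  · rintro n _ ⟨u, hu, rfl⟩
    simp only [hψ n u hu]
    exact hu

theorem semiring_selfDissecting_of_measurable_diagonal {S : Type*} [MeasurableSpace S]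
    (hΔ : MeasurableSet {p : S × S | p.1 = p.2})
    (H : Set (Set S)) (hH : MeasureTheory.IsSetSemiring H)
    (hgen : MeasurableSpace.generateFrom H = ‹MeasurableSpace S›) :
    SelfDissecting H := by
  classical
  have := hasCountableSeparatingOn_of_measurableSet_diagonal hgen hΔ
  obtain ⟨t, htH, ht⟩ := exists_seq_separating S hH.empty_mem univ
  refine ⟨⟨∅, hH.empty_mem⟩, fun A hA => ?_⟩
  choose P hPH hPt using fun n => hH.exists_finpartition_forall_subset_or_disjoint hA
    ((Finset.range n).image t) (by simpa [Set.subset_def] using fun j _ => htH j)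
  have hsep : ∀ x ∈ A, ∀ y ∈ A, x ≠ y →
      ∃ N, ∀ n ≥ N, ∃ u ∈ (P n).parts, Xor (x ∈ u) (y ∈ u) := by
    intro x hx y _ hxy
    obtain ⟨j, hj⟩ : ∃ j, ¬(x ∈ t j ↔ y ∈ t j) := by
      by_contra! h
      exact hxy (ht x (mem_univ x) y (mem_univ y) h)
    refine ⟨j + 1, fun n hn => (P n).exists_xor_mem_of_subset_or_disjoint (fun u hu => ?_) hx hj⟩
    exact hPt n u hu (t j) (Finset.mem_image_of_mem t (Finset.mem_range.2 hn))
  obtain ⟨I, B, hIB, hBP⟩ := exists_isDissectingSystem_of_finpartition P hsep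
  exact ⟨I, B, hIB, fun n k hk => hPH n (hBP n k hk)⟩
end

section
/- If the diagonal Δ belongs to 𝒮 ⊗ 𝒮, then the collection {{M ∈ C(S) : M ∩ A = ∅} : A ∈ 𝒮} is closed under finite intersections and generates the counting σ-field 𝒞(𝒮) on C(S). -/
open MeasureTheory Filter

/-- The space of countable subsets of `S`. -/
def CS (S : Type*) : Type _ := {M : Set S // M.Countable}

/-- The counting map `N_A : C(S) → ℕ₀ ∪ {∞}`, `M ↦ |M ∩ A|`. -/
noncomputable def NA {S : Type*} (A : Set S) (M : CS S) : ℕ∞ := (M.1 ∩ A).encard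

/-- The counting σ-field `𝒞(𝒯)` on `C(S)`: the smallest σ-field making every
`N_A`, `A ∈ 𝒯`, measurable. -/
noncomputable def countingSigma {S : Type*} (T : Set (Set S)) : MeasurableSpace (CS S) :=
  ⨆ A ∈ T, MeasurableSpace.comap (NA A) ⊤

/-- The hit-or-miss σ-field `𝔥(ℰ)` on `C(S)`. -/
def hitOrMiss {S : Type*} (E : Set (Set S)) : MeasurableSpace (CS S) :=
  MeasurableSpace.generateFrom ((fun A => {M : CS S | (M.1 ∩ A).Nonempty}) '' E)

/-- The counting σ-field `𝒞(𝒮)` of the full σ-field of the state space. -/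
noncomputable def countingSigmaField (S : Type*) [MeasurableSpace S] : MeasurableSpace (CS S) :=
  countingSigma {A : Set S | MeasurableSet A}

/-! A measurable diagonal makes `S` countably separated, so `S` injects measurably into the
Cantor space `ℕ → Bool`. There any `n` distinct points lie in pairwise disjoint basic open sets,
so `N_A(M) ≥ n` iff `M ∩ A` meets each of `n` pairwise disjoint sets `f⁻¹(U)` with `U` basic:
a countable union of finite intersections of hit events `{M ∩ B ≠ ∅}`, the complements of
miss events. Conversely each miss event is `{N_A = 0}`. -/

open Set Function

namespace MeasurableSpace

theorem exists_countable_subset_measurableSet_generateFrom_s8 {α : Type*} {G : Set (Set α)}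
    {t : Set α} (ht : MeasurableSet[generateFrom G] t) :
    ∃ g ⊆ G, g.Countable ∧ MeasurableSet[generateFrom g] t := by
  induction t, ht using generateFrom_induction with
  | hC u hu => exact ⟨{u}, singleton_subset_iff.mpr hu, countable_singleton u,
      measurableSet_generateFrom rfl⟩
  | empty => exact ⟨∅, empty_subset G, countable_empty, @MeasurableSet.empty _ (generateFrom ∅)⟩
  | compl u _ ih =>
    obtain ⟨g, hgG, hg, hu⟩ := ih
    exact ⟨g, hgG, hg, hu.compl⟩
  | iUnion u _ ih =>
    choose g hgG hg hu using ih
    exact ⟨⋃ i, g i, iUnion_subset hgG, countable_iUnion hg,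
      .iUnion fun i => generateFrom_mono (subset_iUnion g i) _ (hu i)⟩

theorem countablySeparated_of_measurableSet_diagonal {α : Type*} [MeasurableSpace α]
    (hΔ : MeasurableSet {p : α × α | p.1 = p.2}) : CountablySeparated α := by
  rw [← generateFrom_prod] at hΔ
  obtain ⟨g, hg_rect, hg, hΔg⟩ := exists_countable_subset_measurableSet_generateFrom_s8 hΔ
  have : Countable g := hg.to_subtype
  choose A _ B hB hAB using fun u : g => hg_rect u.2
  refine ⟨⟨range B, countable_range B, forall_mem_range.mpr hB, fun x _ y _ hxy => ?_⟩⟩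
  -- `(x, x)` and `(x, y)` lie in the same rectangles `A u ×ˢ B u`, hence both lie in the diagonal.
  have hsame : ∀ u ∈ g, ((x, x) ∈ u ↔ (x, y) ∈ u) := fun u hu => by
    rw [show u = A ⟨u, hu⟩ ×ˢ B ⟨u, hu⟩ from (hAB ⟨u, hu⟩).symm, mem_prod, mem_prod,
      hxy _ (mem_range_self _)]
  exact (forall_generateFrom_mem_iff_mem_iff.mpr hsame _ hΔg).mp rfl

end MeasurableSpace

theorem Set.nonempty_fin_embedding_of_le_encard {α : Type*} {s : Set α} {n : ℕ}
    (h : (n : ℕ∞) ≤ s.encard) : Nonempty (Fin n ↪ s) := by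
  rw [← Cardinal.lift_mk_le', Cardinal.mk_fin]
  simpa using Cardinal.natCast_le_toENat.mp h

theorem Set.le_encard_of_pairwise_disjoint {α : Type*} {s : Set α} {n : ℕ} {U : Fin n → Set α}
    (hU : Pairwise (Disjoint on U)) (hs : ∀ i, (s ∩ U i).Nonempty) : (n : ℕ∞) ≤ s.encard := by
  choose x hx using hs
  have hinj : Injective x := fun i j hij => by
    by_contra hne
    exact disjoint_left.mp (hU hne) (hx i).2 (hij ▸ (hx j).2)
  calc (n : ℕ∞) = ENat.card (Fin n) := by simp
    _ ≤ (range x).encard := hinj.encard_range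
    _ ≤ s.encard := encard_le_encard (range_subset_iff.mpr fun i => (hx i).1)

open TopologicalSpace in
theorem TopologicalSpace.IsTopologicalBasis.exists_pairwise_disjoint_of_le_encard
    {X : Type*} [TopologicalSpace X] [T2Space X] {B : Set (Set X)} (hB : IsTopologicalBasis B)
    {s : Set X} {n : ℕ} (hn : (n : ℕ∞) ≤ s.encard) :
    ∃ U : Fin n → Set X, (∀ i, U i ∈ B) ∧ Pairwise (Disjoint on U) ∧ ∀ i, (s ∩ U i).Nonempty := by
  obtain ⟨x⟩ := nonempty_fin_embedding_of_le_encard hn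
  obtain ⟨V, hV, hVdisj⟩ := (finite_range fun i => (x i : X)).t2_separation
  choose U hUB hxU hUV using fun i => hB.exists_subset_of_mem_open (hV (x i)).1 (hV (x i)).2
  refine ⟨U, hUB, fun i j hij => ?_, fun i => ⟨x i, (x i).2, hxU i⟩⟩
  have hxij : (x i : X) ≠ x j := Subtype.coe_injective.ne (x.injective.ne hij)
  exact (hVdisj (mem_range_self i) (mem_range_self j) hxij).mono (hUV i) (hUV j)

open MeasurableSpace

section CountingSigma

variable {S : Type*}

theorem countingSigma_le_iff {T : Set (Set S)} {m : MeasurableSpace (CS S)} :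
    countingSigma T ≤ m ↔ ∀ A ∈ T, Measurable[m] (NA A) := by
  simp only [countingSigma, iSup₂_le_iff, measurable_iff_comap_le]
  rfl

theorem measurable_NA_countingSigma {T : Set (Set S)} {A : Set S} (hA : A ∈ T) :
    Measurable[countingSigma T] (NA A) :=
  countingSigma_le_iff.mp le_rfl A hA

end CountingSigma

section MissEvents

variable {S : Type*} [MeasurableSpace S]

def missEvents (S : Type*) [MeasurableSpace S] : Set (Set (CS S)) :=
  {s | ∃ A : Set S, MeasurableSet A ∧ s = {M : CS S | M.1 ∩ A = ∅}}

theorem missEvents_inter_mem {s t : Set (CS S)} (hs : s ∈ missEvents S)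
    (ht : t ∈ missEvents S) : s ∩ t ∈ missEvents S := by
  obtain ⟨A, hA, rfl⟩ := hs
  obtain ⟨B, hB, rfl⟩ := ht
  refine ⟨A ∪ B, hA.union hB, ?_⟩
  ext M
  simp only [mem_inter_iff, mem_ofPred_eq, inter_union_distrib_left, union_empty_iff]

theorem generateFrom_missEvents_le_countingSigmaField :
    generateFrom (missEvents S) ≤ countingSigmaField S := by
  refine generateFrom_le ?_
  rintro _ ⟨A, hA, rfl⟩
  have hmiss : {M : CS S | M.1 ∩ A = ∅} = NA A ⁻¹' {0} := by
    ext M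
    simp [NA]
  rw [hmiss]
  exact measurable_NA_countingSigma (T := {A | MeasurableSet A}) hA (measurableSet_singleton 0)

theorem measurableSet_hit {B : Set S} (hB : MeasurableSet B) :
    MeasurableSet[generateFrom (missEvents S)] {M : CS S | (M.1 ∩ B).Nonempty} := by
  have hhit : {M : CS S | (M.1 ∩ B).Nonempty} = {M : CS S | M.1 ∩ B = ∅}ᶜ := by
    ext M
    simp [nonempty_iff_ne_empty]
  rw [hhit]
  exact (measurableSet_generateFrom (show _ ∈ missEvents S from ⟨B, hB, rfl⟩)).compl

variable [CountablySeparated S]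

open TopologicalSpace in
theorem measurableSet_natCast_le_NA {A : Set S} (hA : MeasurableSet A) (n : ℕ) :
    MeasurableSet[generateFrom (missEvents S)] {M : CS S | (n : ℕ∞) ≤ NA A M} := by
  obtain ⟨f, hf, hinj⟩ := measurable_injection_nat_bool_of_countablySeparated S
  have hB := isBasis_countableBasis (ℕ → Bool)
  have : Countable (countableBasis (ℕ → Bool)) := (countable_countableBasis _).to_subtype
  have key : {M : CS S | (n : ℕ∞) ≤ NA A M} =
      ⋃ (U : Fin n → countableBasis (ℕ → Bool)) (_ : Pairwise (Disjoint on fun i => (U i).1)),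
        ⋂ i, {M : CS S | (M.1 ∩ (A ∩ f ⁻¹' U i)).Nonempty} := by
    ext M
    simp only [NA, mem_ofPred_eq, mem_iUnion, mem_iInter, ← hinj.encard_image (M.1 ∩ A),
      ← inter_assoc, ← image_inter_nonempty_iff]
    constructor
    · intro hn
      obtain ⟨U, hUB, hU, hhit⟩ := hB.exists_pairwise_disjoint_of_le_encard hn
      exact ⟨fun i => ⟨U i, hUB i⟩, hU, hhit⟩
    · rintro ⟨U, hU, hhit⟩
      exact le_encard_of_pairwise_disjoint hU hhit
  rw [key]
  exact .iUnion fun U => .iUnion fun _ => .iInter fun i =>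
    measurableSet_hit (hA.inter (hf (hB.isOpen (U i).2).measurableSet))

theorem measurable_NA {A : Set S} (hA : MeasurableSet A) :
    Measurable[generateFrom (missEvents S)] (NA A) := by
  refine (@ENat.measurable_iff _ (generateFrom (missEvents S)) _).mpr fun n => ?_
  have hlevel : NA A ⁻¹' {(n : ℕ∞)} =
      {M | (n : ℕ∞) ≤ NA A M} \ {M | ((n + 1 : ℕ) : ℕ∞) ≤ NA A M} := by
    ext M
    rw [mem_preimage, mem_singleton_iff, Set.mem_sdiff, mem_ofPred_eq, mem_ofPred_eq, not_le,
      Nat.cast_succ, ENat.lt_add_one_iff (ENat.natCast_ne_top n), le_antisymm_iff, and_comm]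
  rw [hlevel]
  exact (measurableSet_natCast_le_NA hA n).diff (measurableSet_natCast_le_NA hA (n + 1))

end MissEvents

theorem missEvents_interStable_and_generate {S : Type*} [MeasurableSpace S]
    (hΔ : MeasurableSet {p : S × S | p.1 = p.2}) :
    (∀ s ∈ {s : Set (CS S) | ∃ A : Set S, MeasurableSet A ∧ s = {M : CS S | M.1 ∩ A = ∅}},
      ∀ t ∈ {s : Set (CS S) | ∃ A : Set S, MeasurableSet A ∧ s = {M : CS S | M.1 ∩ A = ∅}},
        s ∩ t ∈ {s : Set (CS S) | ∃ A : Set S, MeasurableSet A ∧ s = {M : CS S | M.1 ∩ A = ∅}}) ∧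
    MeasurableSpace.generateFrom
        {s : Set (CS S) | ∃ A : Set S, MeasurableSet A ∧ s = {M : CS S | M.1 ∩ A = ∅}} =
      countingSigmaField S := by
  have := countablySeparated_of_measurableSet_diagonal hΔ
  exact ⟨fun s hs t ht => missEvents_inter_mem hs ht,
    le_antisymm generateFrom_missEvents_le_countingSigmaField
      (countingSigma_le_iff.mpr fun A hA => measurable_NA hA)⟩
end

section
/- Let S be a separable metric space with Borel σ-field 𝒮, and let π₁, π₂ : Ω → C(S) be constructive countable random sets. If P(π₁ ∩ F ≠ ∅) = P(π₂ ∩ F ≠ ∅) for every closed set F ⊆ S, then π₁ and π₂ have the same law on (C(S), 𝒞(𝒮)). -/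
open MeasureTheory Filter

/-- A finite countable random set: a measurable map into `(C(S), 𝒞(𝒮))` taking
finite values. -/
def FiniteCr {Ω S : Type*} [MeasurableSpace Ω] [MeasurableSpace S] (π : Ω → CS S) : Prop :=
  @Measurable Ω (CS S) _ (countingSigmaField S) π ∧ ∀ ω, (π ω).1.Finite

/-- A map into `C(S)` is constructive if it is a countable union of finite
countable random sets. -/
def Constructive {Ω S : Type*} [MeasurableSpace Ω] [MeasurableSpace S] (π : Ω → CS S) : Prop :=
  ∃ πk : ℕ → Ω → CS S, (∀ k, FiniteCr (πk k)) ∧ ∀ ω, (π ω).1 = ⋃ k, (πk k ω).1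

/-!
Both laws agree on the σ-field `𝔥` generated by the events "`π` hits `F`", `F` closed, because
the complementary avoidance events form a π-system. To pass from `𝔥` to `𝒞(𝒮)`, attach to a
constructive random set a finite measure `ρ` on `S` whose null sets are almost surely missed:
the sum over its finite pieces `τ` of `B ↦ 𝔼[|τ ∩ B| / (1 + |τ|)]`. By inner regularity of `ρ`
every Borel set `A` contains an `F_σ` set `G` with `ρ (A \ G) = 0`, so `N_A = N_G` almost
surely; and in a separable metric space `N_G` is `𝔥`-measurable, since `j ≤ N_G` says that `M ∩ G`
meets `j` pairwise disjoint basic open sets. Hence every set of `𝒞(𝒮)` is a.s. equal to an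
`𝔥`-set for both laws.
-/

open Set TopologicalSpace
open scoped ENNReal

theorem Set.nonempty_embedding_fin_of_natCast_le_encard {α : Type*} {s : Set α} {j : ℕ}
    (h : (j : ℕ∞) ≤ s.encard) : Nonempty (Fin j ↪ s) := by
  rw [Set.encard, ENat.card, Cardinal.natCast_le_toENat] at h
  exact Cardinal.lift_mk_le'.1 (by simpa using h)

theorem TopologicalSpace.IsTopologicalBasis.natCast_le_encard_iff {X : Type*}
    [TopologicalSpace X] [T2Space X] {B : Set (Set X)} (hB : IsTopologicalBasis B)
    {s : Set X} {j : ℕ} :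
    (j : ℕ∞) ≤ s.encard ↔
      ∃ v : Fin j → B, Pairwise (Function.onFun Disjoint fun l => (v l : Set X)) ∧
        ∀ l, (s ∩ v l).Nonempty := by
  constructor
  · intro h
    obtain ⟨x⟩ := Set.nonempty_embedding_fin_of_natCast_le_encard h
    obtain ⟨t, ht, htd⟩ := (pairwise_disjoint_nhds.comp_of_injective
      (Subtype.val_injective.comp x.injective)).exists_mem_filter_of_disjoint
    have hv : ∀ l, ∃ u ∈ B, (x l : X) ∈ u ∧ u ⊆ t l := fun l => hB.mem_nhds_iff.1 (ht l)
    choose u huB hxu hut using hv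
    exact ⟨fun l => ⟨u l, huB l⟩, fun a b hab => (htd hab).mono (hut a) (hut b),
      fun l => ⟨x l, (x l).2, hxu l⟩⟩
  · rintro ⟨v, hvd, hvs⟩
    choose x hxs hxv using hvs
    have hx : Function.Injective x := fun a b hab => by
      by_contra hne
      exact Set.disjoint_left.1 (hvd hne) (hxv a) (hab ▸ hxv b)
    calc (j : ℕ∞) = ENat.card (Fin j) := by simp
      _ ≤ (range x).encard := hx.encard_range
      _ ≤ s.encard := encard_le_encard (range_subset_iff.2 hxs)

theorem ENat.measurable_of_measurableSet_natCast_le {α : Type*} [MeasurableSpace α]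
    {f : α → ℕ∞} (hf : ∀ j : ℕ, MeasurableSet {x | (j : ℕ∞) ≤ f x}) : Measurable f := by
  refine measurable_to_countable' fun c => ?_
  induction c using ENat.recTopCoe with
  | top =>
    have : f ⁻¹' {⊤} = ⋂ j : ℕ, {x | (j : ℕ∞) ≤ f x} := by
      ext x
      simp [ENat.eq_top_iff_forall_ge]
    exact this ▸ .iInter hf
  | coe n =>
    have : f ⁻¹' {(n : ℕ∞)} = {x | (n : ℕ∞) ≤ f x} \ {x | ((n + 1 : ℕ) : ℕ∞) ≤ f x} := by
      ext x
      simp [ENat.add_one_le_iff (ENat.natCast_ne_top n), le_antisymm_iff, and_comm]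
    exact this ▸ (hf n).diff (hf (n + 1))

namespace MeasurableSpace

variable {α : Type*}

def aeClosure {m : MeasurableSpace α} (m₀ : MeasurableSpace α) (μ : Measure[m] α) :
    MeasurableSpace α where
  MeasurableSet' s := ∃ t, MeasurableSet[m₀] t ∧ s =ᵐ[μ] t
  measurableSet_empty := ⟨∅, .empty, .rfl⟩
  measurableSet_compl _ := fun ⟨t, ht, hst⟩ => ⟨tᶜ, ht.compl, hst.compl⟩
  measurableSet_iUnion f hf := by
    choose t ht hft using hf
    exact ⟨⋃ i, t i, .iUnion ht, .countable_iUnion hft⟩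

end MeasurableSpace

theorem MeasureTheory.Measure.ext_of_trim_eq_of_le_aeClosure {α : Type*}
    {m₀ m : MeasurableSpace α} {μ ν : Measure α} (hle : m₀ ≤ m) (htrim : μ.trim hle = ν.trim hle)
    (hae : m ≤ MeasurableSpace.aeClosure m₀ (μ + ν)) : μ = ν := by
  ext s hs
  obtain ⟨t, ht, hst⟩ := hae s hs
  calc μ s = μ t := measure_congr (hst.filter_mono (ae_mono (Measure.le_add_right le_rfl)))
    _ = ν t := by rw [← trim_measurableSet_eq hle ht, htrim, trim_measurableSet_eq hle ht]
    _ = ν s := (measure_congr (hst.filter_mono (ae_mono (Measure.le_add_left le_rfl)))).symm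

theorem MeasurableSet.exists_iUnion_isClosed_subset_measure_sdiff_eq_zero {X : Type*}
    [TopologicalSpace X] [MeasurableSpace X] [OpensMeasurableSpace X] {ρ : Measure X}
    [ρ.WeaklyRegular] {A : Set X} (hA : MeasurableSet A) (hρA : ρ A ≠ ∞) :
    ∃ C : ℕ → Set X, (∀ n, IsClosed (C n)) ∧ ⋃ n, C n ⊆ A ∧ ρ (A \ ⋃ n, C n) = 0 := by
  have hF (n : ℕ) : ∃ F ⊆ A, IsClosed F ∧ ρ (A \ F) < (n : ℝ≥0∞)⁻¹ :=
    hA.exists_isClosed_sdiff_lt hρA (ENNReal.inv_ne_zero.2 (ENNReal.natCast_ne_top n))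
  choose F hFA hF hρF using hF
  refine ⟨F, hF, iUnion_subset hFA, ?_⟩
  by_contra hpos
  obtain ⟨n, hn⟩ := ENNReal.exists_inv_nat_lt hpos
  exact (hn.trans_le (measure_mono (sdiff_subset_sdiff_right (subset_iUnion F n)))).not_gt (hρF n)

namespace CS

variable {S : Type*}

def hitting (A : Set S) : Set (CS S) := {M | (M.1 ∩ A).Nonempty}

def closedHitOrMiss (S : Type*) [TopologicalSpace S] : MeasurableSpace (CS S) :=
  hitOrMiss {F | IsClosed F}

theorem hitting_iUnion {ι : Sort*} (A : ι → Set S) : hitting (⋃ i, A i) = ⋃ i, hitting (A i) := by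
  ext M
  simp [hitting, inter_iUnion]

theorem hitting_union (A B : Set S) : hitting (A ∪ B) = hitting A ∪ hitting B := by
  ext M
  simp [hitting, inter_union_distrib_left]

theorem NA_eq_of_notMem_hitting_sdiff {A G : Set S} {M : CS S} (hGA : G ⊆ A)
    (hM : M ∉ hitting (A \ G)) : NA A M = NA G M := by
  have hempty : M.1 ∩ (A \ G) = ∅ := not_nonempty_iff_eq_empty.1 hM
  rw [NA, NA, ← union_sdiff_cancel hGA, inter_union_distrib_left, hempty, union_empty]

theorem measurable_NA [MeasurableSpace S] {A : Set S} (hA : MeasurableSet A) :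
    Measurable[countingSigmaField S] (NA A) :=
  measurable_iff_comap_le.2 <|
    le_iSup₂ (f := fun A (_ : MeasurableSet A) => MeasurableSpace.comap (NA A) ⊤) A hA

theorem measurableSet_hitting [MeasurableSpace S] {A : Set S} (hA : MeasurableSet A) :
    MeasurableSet[countingSigmaField S] (hitting A) := by
  have : hitting A = NA A ⁻¹' {0}ᶜ := by
    ext M
    simp [hitting, NA, ← encard_ne_zero]
  exact this ▸ measurable_NA hA trivial

section Topology

variable [TopologicalSpace S]

theorem measurableSet_hitting_of_isClosed {F : Set S} (hF : IsClosed F) :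
    MeasurableSet[closedHitOrMiss S] (hitting F) :=
  MeasurableSpace.measurableSet_generateFrom ⟨F, hF, rfl⟩

theorem closedHitOrMiss_le_countingSigmaField [MeasurableSpace S] [OpensMeasurableSpace S] :
    closedHitOrMiss S ≤ countingSigmaField S :=
  MeasurableSpace.generateFrom_le <| by
    rintro _ ⟨F, hF, rfl⟩
    exact measurableSet_hitting hF.measurableSet

theorem closedHitOrMiss_eq_generateFrom_avoiding :
    closedHitOrMiss S =
      MeasurableSpace.generateFrom ((fun F => (hitting F)ᶜ) '' {F | IsClosed F}) := by
  apply le_antisymm <;> refine MeasurableSpace.generateFrom_le ?_ <;> rintro _ ⟨F, hF, rfl⟩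
  · exact .of_compl (MeasurableSpace.measurableSet_generateFrom (mem_image_of_mem _ hF))
  · exact (measurableSet_hitting_of_isClosed hF).compl

theorem isPiSystem_avoiding :
    IsPiSystem ((fun F : Set S => (hitting F)ᶜ) '' {F | IsClosed F}) := by
  rintro _ ⟨F, hF, rfl⟩ _ ⟨F', hF', rfl⟩ -
  refine ⟨F ∪ F', hF.union hF', ?_⟩
  simp only [hitting_union, compl_union]

theorem trim_eq_of_hitting_isClosed {m : MeasurableSpace (CS S)} (hle : closedHitOrMiss S ≤ m)
    {μ ν : Measure (CS S)} [IsFiniteMeasure μ] (huniv : μ univ = ν univ)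
    (h : ∀ F, IsClosed F → μ (hitting F) = ν (hitting F)) : μ.trim hle = ν.trim hle := by
  have hm : ∀ F : Set S, IsClosed F → MeasurableSet[m] (hitting F) :=
    fun F hF => hle _ (measurableSet_hitting_of_isClosed hF)
  refine ext_of_generate_finite _ closedHitOrMiss_eq_generateFrom_avoiding isPiSystem_avoiding
    ?_ ?_
  · rintro _ ⟨F, hF, rfl⟩
    rw [trim_measurableSet_eq hle (measurableSet_hitting_of_isClosed hF).compl,
      trim_measurableSet_eq hle (measurableSet_hitting_of_isClosed hF).compl,
      measure_compl (hm F hF) (measure_ne_top μ _),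
      measure_compl (hm F hF) (h F hF ▸ measure_ne_top μ _), h F hF, huniv]
  · rw [trim_measurableSet_eq hle MeasurableSet.univ, trim_measurableSet_eq hle MeasurableSet.univ,
      huniv]

theorem measurableSet_hitting_iUnion_isClosed {ι : Sort*} [Countable ι] {C : ι → Set S}
    (hC : ∀ i, IsClosed (C i)) : MeasurableSet[closedHitOrMiss S] (hitting (⋃ i, C i)) :=
  hitting_iUnion C ▸ .iUnion fun i => measurableSet_hitting_of_isClosed (hC i)

end Topology

section Metric

variable [MetricSpace S]

theorem measurableSet_hitting_iUnion_isClosed_inter_isOpen {C : ℕ → Set S}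
    (hC : ∀ n, IsClosed (C n)) {U : Set S} (hU : IsOpen U) :
    MeasurableSet[closedHitOrMiss S] (hitting ((⋃ n, C n) ∩ U)) := by
  obtain ⟨D, hD, -, rfl, -⟩ := hU.exists_iUnion_isClosed
  rw [iUnion_inter_iUnion, hitting_iUnion]
  exact .iUnion fun n => measurableSet_hitting_iUnion_isClosed fun m => (hC n).inter (hD m)

theorem measurable_NA_iUnion_isClosed [SeparableSpace S] {C : ℕ → Set S}
    (hC : ∀ n, IsClosed (C n)) : Measurable[closedHitOrMiss S] (NA (⋃ n, C n)) := by
  refine @ENat.measurable_of_measurableSet_natCast_le _ (closedHitOrMiss S) _ fun j => ?_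
  have hlevel : {M : CS S | (j : ℕ∞) ≤ NA (⋃ n, C n) M} =
      ⋃ (v : Fin j → countableBasis S)
        (_ : Pairwise (Function.onFun Disjoint fun l => (v l : Set S))),
        ⋂ l, hitting ((⋃ n, C n) ∩ v l) := by
    ext M
    simp [NA, (isBasis_countableBasis S).natCast_le_encard_iff, hitting, inter_assoc]
  have := (countable_countableBasis S).to_subtype
  rw [hlevel]
  exact .iUnion fun v => .iUnion fun _ => .iInter fun l =>
    measurableSet_hitting_iUnion_isClosed_inter_isOpen hC (isOpen_of_mem_countableBasis (v l).2)

end Metric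

section Approximation

variable [MetricSpace S] [SeparableSpace S] [MeasurableSpace S] [BorelSpace S]

theorem countingSigmaField_le_aeClosure {ν : Measure[countingSigmaField S] (CS S)}
    (ρ : Measure S) [IsFiniteMeasure ρ] (hρ : ∀ B, MeasurableSet B → ρ B = 0 → ν (hitting B) = 0) :
    countingSigmaField S ≤ MeasurableSpace.aeClosure (closedHitOrMiss S) ν := by
  refine iSup₂_le fun A hA => ?_
  rintro _ ⟨T, -, rfl⟩
  obtain ⟨C, hC, hCA, hnull⟩ :=
    hA.exists_iUnion_isClosed_subset_measure_sdiff_eq_zero (measure_ne_top ρ A)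
  refine ⟨NA (⋃ n, C n) ⁻¹' T, measurable_NA_iUnion_isClosed hC trivial, ?_⟩
  have hmeas : MeasurableSet (A \ ⋃ n, C n) := hA.diff (.iUnion fun n => (hC n).measurableSet)
  filter_upwards [measure_eq_zero_iff_ae_notMem.1 (hρ _ hmeas hnull)] with M hM
  change (NA A M ∈ T) = (NA (⋃ n, C n) M ∈ T)
  rw [NA_eq_of_notMem_hitting_sdiff hCA hM]

end Approximation

section Intensity

variable {Ω : Type*} [MeasurableSpace Ω] [MeasurableSpace S]

theorem measurable_coe_NA_comp {τ : Ω → CS S} (hτ : Measurable[_, countingSigmaField S] τ)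
    {B : Set S} (hB : MeasurableSet B) : Measurable fun ω => (NA B (τ ω) : ℝ≥0∞) :=
  Measurable.of_discrete.comp ((measurable_NA hB).comp hτ)

theorem measurable_normalizedIntensity_integrand {τ : Ω → CS S}
    (hτ : Measurable[_, countingSigmaField S] τ) {B : Set S} (hB : MeasurableSet B) :
    Measurable fun ω => (1 + (NA univ (τ ω) : ℝ≥0∞))⁻¹ * NA B (τ ω) :=
  (measurable_const.add (measurable_coe_NA_comp hτ .univ)).inv.mul (measurable_coe_NA_comp hτ hB)

variable [MeasurableSingletonClass S]

theorem count_restrict_apply (M : CS S) {B : Set S} (hB : MeasurableSet B) :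
    Measure.count.restrict M.1 B = NA B M := by
  rw [Measure.restrict_apply hB, Measure.count_apply (hB.inter M.2.measurableSet), NA, inter_comm]

/-- `B ↦ 𝔼[|τ ∩ B| / (1 + |τ|)]`; the weight keeps the total mass below `P univ`. -/
noncomputable def normalizedIntensity (P : Measure Ω) (τ : Ω → CS S) : Measure S :=
  P.bind fun ω => (1 + (NA univ (τ ω) : ℝ≥0∞))⁻¹ • Measure.count.restrict (τ ω).1

instance (P : Measure Ω) [IsFiniteMeasure P] (τ : Ω → CS S) :
    IsFiniteMeasure (normalizedIntensity P τ) := by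
  refine ⟨(Measure.bind_apply_le _ .univ).trans_lt ?_⟩
  calc ∫⁻ ω, ((1 + (NA univ (τ ω) : ℝ≥0∞))⁻¹ • Measure.count.restrict (τ ω).1) univ ∂P
      ≤ ∫⁻ _, 1 ∂P := by
        refine lintegral_mono fun ω => ?_
        rw [Measure.smul_apply, count_restrict_apply _ .univ, smul_eq_mul]
        calc (1 + (NA univ (τ ω) : ℝ≥0∞))⁻¹ * NA univ (τ ω)
            ≤ (1 + (NA univ (τ ω) : ℝ≥0∞))⁻¹ * (1 + NA univ (τ ω)) := by gcongr; exact le_add_self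
          _ ≤ 1 := ENNReal.inv_mul_le_one _
    _ < ∞ := by simp

theorem normalizedIntensity_apply (P : Measure Ω) {τ : Ω → CS S}
    (hτ : Measurable[_, countingSigmaField S] τ) {B : Set S} (hB : MeasurableSet B) :
    normalizedIntensity P τ B = ∫⁻ ω, (1 + (NA univ (τ ω) : ℝ≥0∞))⁻¹ * NA B (τ ω) ∂P := by
  rw [normalizedIntensity, Measure.bind_apply hB]
  · simp [count_restrict_apply _ hB]
  · refine (Measure.measurable_of_measurable_coe _ fun B hB => ?_).aemeasurable
    simp only [Measure.smul_apply, count_restrict_apply _ hB, smul_eq_mul]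
    exact measurable_normalizedIntensity_integrand hτ hB

theorem _root_.FiniteCr.measure_preimage_hitting_eq_zero {P : Measure Ω} {τ : Ω → CS S}
    (hτ : FiniteCr τ) {B : Set S} (hB : MeasurableSet B) (h0 : normalizedIntensity P τ B = 0) :
    P (τ ⁻¹' hitting B) = 0 := by
  rw [normalizedIntensity_apply P hτ.1 hB, lintegral_eq_zero_iff
    (measurable_normalizedIntensity_integrand hτ.1 hB)] at h0
  refine measure_eq_zero_iff_ae_notMem.2 (h0.mono fun ω hω hhit => ?_)
  rcases mul_eq_zero.1 hω with hw | hN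
  · have : (τ ω).1.encard ≠ ⊤ := (hτ.2 ω).encard_lt_top.ne
    simp_all [NA]
  · simp_all [NA, hitting]

theorem _root_.Constructive.exists_isFiniteMeasure_hitting_null {π : Ω → CS S}
    (hπ : Constructive π) (P : Measure Ω) [IsFiniteMeasure P] :
    ∃ ρ : Measure S, IsFiniteMeasure ρ ∧
      ∀ B, MeasurableSet B → ρ B = 0 → P (π ⁻¹' hitting B) = 0 := by
  obtain ⟨τ, hτ, hπτ⟩ := hπ
  let μ := Measure.sum fun k => normalizedIntensity P (τ k)
  refine ⟨μ.toFinite, inferInstance, fun B hB h0 => ?_⟩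
  have hk := Measure.sum_apply_eq_zero.1 (absolutelyContinuous_toFinite μ h0)
  have hunion : π ⁻¹' hitting B = ⋃ k, τ k ⁻¹' hitting B := by
    ext ω
    simp [hitting, hπτ, iUnion_inter]
  rw [hunion]
  exact measure_iUnion_null fun k => (hτ k).measure_preimage_hitting_eq_zero hB (hk k)

end Intensity

end CS

theorem uniqueness_constructive_closed_sets {Ω S : Type*}
    [MeasurableSpace Ω] [MetricSpace S] [TopologicalSpace.SeparableSpace S]
    [MeasurableSpace S] [BorelSpace S]
    (P : Measure Ω) [IsProbabilityMeasure P]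
    (π₁ π₂ : Ω → CS S)
    (hm₁ : @Measurable Ω (CS S) _ (countingSigmaField S) π₁)
    (hm₂ : @Measurable Ω (CS S) _ (countingSigmaField S) π₂)
    (hc₁ : Constructive π₁) (hc₂ : Constructive π₂)
    (h : ∀ F : Set S, IsClosed F →
      P {ω | ((π₁ ω).1 ∩ F).Nonempty} = P {ω | ((π₂ ω).1 ∩ F).Nonempty}) :
    @Measure.map Ω (CS S) _ (countingSigmaField S) π₁ P =
      @Measure.map Ω (CS S) _ (countingSigmaField S) π₂ P := by
  let _ := countingSigmaField S
  obtain ⟨ρ₁, _, hρ₁⟩ := hc₁.exists_isFiniteMeasure_hitting_null P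
  obtain ⟨ρ₂, _, hρ₂⟩ := hc₂.exists_isFiniteMeasure_hitting_null P
  have := Measure.isProbabilityMeasure_map (μ := P) hm₁.aemeasurable
  have hhit {π : Ω → CS S} (hm : Measurable π) {B : Set S} (hB : MeasurableSet B) :
      P.map π (CS.hitting B) = P (π ⁻¹' CS.hitting B) :=
    Measure.map_apply hm (CS.measurableSet_hitting hB)
  refine Measure.ext_of_trim_eq_of_le_aeClosure CS.closedHitOrMiss_le_countingSigmaField ?_ ?_
  · refine CS.trim_eq_of_hitting_isClosed _ ?_ fun F hF => ?_
    · simp [Measure.map_apply hm₁ .univ, Measure.map_apply hm₂ .univ]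
    · rw [hhit hm₁ hF.measurableSet, hhit hm₂ hF.measurableSet]
      exact h F hF
  · refine CS.countingSigmaField_le_aeClosure (ρ₁ + ρ₂) fun B hB h0 => ?_
    rw [Measure.add_apply, add_eq_zero] at h0
    rw [Measure.add_apply, hhit hm₁ hB, hhit hm₂ hB, hρ₁ B hB h0.1, hρ₂ B hB h0.2, add_zero]
end

section
/- Let Δ ∈ 𝒮 ⊗ 𝒮 and let ℛ ⊆ 𝒮 be a ring with σ(ℛ) = 𝒮. If π₁, π₂ : Ω → C(S) are countable random sets with P(π₁ ∩ A ≠ ∅) = P(π₂ ∩ A ≠ ∅) for all A ∈ ℛ, and if π₁ is σ-finite on ℛ, then π₁ and π₂ have the same law on (C(S), 𝒞(𝒮)). -/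
open MeasureTheory Filter

/-!
Since the diagonal is measurable and `ℛ` generates `𝒮`, countably many sets `cᵢ ∈ ℛ` separate
the points of `S`. For `A ∈ ℛ`, `N_A(M)` is the supremum over `m` of the number of cells
`A ∩ {x | {i < m | x ∈ cᵢ} = σ}` hit by `M`; these cells lie in `ℛ`, so `N_A` is measurable for
the hit-or-miss σ-field `𝔥(ℛ)`. The avoidance events `{M ∩ A = ∅}`, `A ∈ ℛ`, form a π-system
generating `𝔥(ℛ)`, so the laws of `π₁` and `π₂` agree on `𝔥(ℛ)`.

The configurations finite on every `Aₙ` form an `𝔥(ℛ)`-measurable set that carries `π₁` surely,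
hence `π₂` almost surely. On it the counts `B ↦ N_{B ∩ Aₙ}` are finite, so they pass to
complements and disjoint unions, and a Dynkin argument makes every `N_B`, `B ∈ 𝒮`, measurable for
the trace of `𝔥(ℛ)`. Thus the traces of `𝒞(𝒮)` and `𝔥(ℛ)` coincide there, and the laws agree.
-/

open MeasurableSpace Set Function

theorem ENat.measurable_of_measurableSet_le {α : Type*} [MeasurableSpace α] {f : α → ℕ∞}
    (h : ∀ k : ℕ, MeasurableSet {a | (k : ℕ∞) ≤ f a}) : Measurable f := by
  refine ENat.measurable_iff.2 fun k => ?_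
  have hk : f ⁻¹' {(k : ℕ∞)} = {a | (k : ℕ∞) ≤ f a} \ {a | ((k + 1 : ℕ) : ℕ∞) ≤ f a} := by
    ext a
    simp only [mem_preimage, mem_singleton_iff, Set.mem_sdiff, mem_ofPred_eq]
    generalize f a = v
    cases v using ENat.recTopCoe
    · simp
    · norm_cast; omega
  exact hk ▸ (h k).diff (h (k + 1))

theorem Set.natCast_le_encard_iUnion_iff {α : Type*} {s : ℕ → Set α} (hs : Monotone s) (k : ℕ) :
    (k : ℕ∞) ≤ (⋃ n, s n).encard ↔ ∃ n, (k : ℕ∞) ≤ (s n).encard := by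
  refine ⟨fun hk => ?_, fun ⟨n, hn⟩ => hn.trans (encard_le_encard (subset_iUnion s n))⟩
  obtain ⟨t, hts, htk⟩ := exists_subset_encard_eq hk
  obtain ⟨t, rfl⟩ := (finite_of_encard_eq_coe htk).exists_finset_coe
  obtain ⟨n, hn⟩ := hs.directed_le.exists_mem_subset_of_finset_subset_biUnion hts
  exact ⟨n, htk ▸ encard_le_encard hn⟩

theorem measurable_encard_iUnion_of_monotone {α β : Type*} [MeasurableSpace α] {s : ℕ → α → Set β}
    (hmono : ∀ a, Monotone (s · a)) (hs : ∀ n, Measurable fun a => (s n a).encard) :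
    Measurable fun a => (⋃ n, s n a).encard := by
  refine ENat.measurable_of_measurableSet_le fun k => ?_
  simp_rw [natCast_le_encard_iUnion_iff (hmono _), ofPred_exists]
  exact .iUnion fun n => hs n (.of_discrete (s := Ici (k : ℕ∞)))

section FiniteCounts

variable {α β : Type*} [MeasurableSpace α] {s : α → Set β}

theorem measurable_encard_inter_union {A B : Set β} (hAB : Disjoint A B)
    (hA : Measurable fun a => (s a ∩ A).encard) (hB : Measurable fun a => (s a ∩ B).encard) :
    Measurable fun a => (s a ∩ (A ∪ B)).encard := by
  have hsplit : ∀ a, (s a ∩ (A ∪ B)).encard = (s a ∩ A).encard + (s a ∩ B).encard := fun a => by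
    rw [inter_union_distrib_left, encard_union_eq (hAB.mono inter_subset_right inter_subset_right)]
  simp_rw [hsplit]
  exact hA.add hB

theorem measurable_encard_inter_iUnion {f : ℕ → Set β} (hf : Pairwise (Disjoint on f))
    (h : ∀ i, Measurable fun a => (s a ∩ f i).encard) :
    Measurable fun a => (s a ∩ ⋃ i, f i).encard := by
  have hacc : ∀ n, Measurable fun a => (s a ∩ accumulate f n).encard := by
    intro n
    induction n with
    | zero => simpa only [accumulate_zero_nat] using h 0
    | succ n ih =>
      rw [accumulate_succ]
      exact measurable_encard_inter_union (disjoint_accumulate hf n.lt_succ_self) ih (h _)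
  rw [← iUnion_accumulate]
  simp_rw [inter_iUnion]
  exact measurable_encard_iUnion_of_monotone (fun a _ _ hmn => inter_subset_inter_right _
    (monotone_accumulate hmn)) hacc

theorem measurable_encard_inter_compl (hfin : ∀ a, (s a).Finite)
    (hs : Measurable fun a => (s a).encard) {A : Set β}
    (hA : Measurable fun a => (s a ∩ A).encard) :
    Measurable fun a => (s a ∩ Aᶜ).encard := by
  have hsplit : ∀ a, (s a ∩ Aᶜ).encard = (s a).encard - (s a ∩ A).encard := fun a => by
    rw [← sdiff_eq, ← sdiff_self_inter, encard_sdiff inter_subset_left ((hfin a).inter_of_left A)]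
  simp_rw [hsplit]
  exact hs.sub hA

theorem measurable_encard_inter_of_isPiSystem [m : MeasurableSpace β] {R : Set (Set β)}
    (hgen : generateFrom R = m) (hpi : IsPiSystem R) (hfin : ∀ a, (s a).Finite)
    (hs : Measurable fun a => (s a).encard) (hR : ∀ A ∈ R, Measurable fun a => (s a ∩ A).encard)
    {A : Set β} (hA : MeasurableSet A) : Measurable fun a => (s a ∩ A).encard := by
  induction A, hA using MeasurableSpace.induction_on_inter hgen.symm hpi with
  | empty => simp
  | basic A hA => exact hR A hA
  | compl A _ ih => exact measurable_encard_inter_compl hfin hs ih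
  | iUnion f hf _ ih => exact measurable_encard_inter_iUnion hf ih

end FiniteCounts

theorem MeasurableSpace.exists_countable_subset_measurableSet_generateFrom_s18 {α : Type*}
    {C : Set (Set α)} {s : Set α} (hs : MeasurableSet[generateFrom C] s) :
    ∃ C₀ ⊆ C, C₀.Countable ∧ MeasurableSet[generateFrom C₀] s := by
  induction hs with
  | basic u hu => exact ⟨{u}, singleton_subset_iff.2 hu, countable_singleton u,
      measurableSet_generateFrom rfl⟩
  | empty => exact ⟨∅, empty_subset _, countable_empty, @MeasurableSet.empty _ (generateFrom ∅)⟩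
  | compl u _ ih =>
    obtain ⟨C₀, hC₀, hC₀c, hu⟩ := ih
    exact ⟨C₀, hC₀, hC₀c, hu.compl⟩
  | iUnion f _ ih =>
    choose C₀ hC₀ hC₀c hf using ih
    exact ⟨⋃ n, C₀ n, iUnion_subset hC₀, countable_iUnion hC₀c,
      .iUnion fun n => generateFrom_mono (subset_iUnion C₀ n) _ (hf n)⟩

theorem exists_seq_separating_of_measurableSet_diagonal {S : Type*} [m : MeasurableSpace S]
    {R : Set (Set S)} (hgen : generateFrom R = m) (hne : R.Nonempty)
    (hΔ : MeasurableSet (diagonal S)) :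
    ∃ c : ℕ → Set S, (∀ i, c i ∈ R) ∧ ∀ x y, (∀ i, x ∈ c i ↔ y ∈ c i) → x = y := by
  have hprod : MeasurableSet[generateFrom ((Prod.fst ⁻¹' ·) '' R ∪ (Prod.snd ⁻¹' ·) '' R)]
      (diagonal S) := by
    rwa [← generateFrom_sup_generateFrom, ← comap_generateFrom, ← comap_generateFrom, hgen]
  obtain ⟨G₀, hG₀, hG₀c, hΔ₀⟩ := exists_countable_subset_measurableSet_generateFrom_s18 hprod
  have hcyl : ∀ g ∈ G₀, ∃ C ∈ R, g = Prod.fst ⁻¹' C ∨ g = Prod.snd ⁻¹' C := by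
    intro g hg
    rcases hG₀ hg with ⟨C, hC, rfl⟩ | ⟨C, hC, rfl⟩
    exacts [⟨C, hC, .inl rfl⟩, ⟨C, hC, .inr rfl⟩]
  choose! base hbaseR hbase using hcyl
  obtain ⟨r, hr⟩ := hne
  obtain ⟨c, hc⟩ := ((hG₀c.image base).insert r).exists_eq_range (insert_nonempty _ _)
  refine ⟨c, fun i => ?_, fun x y hxy => ?_⟩
  · rcases hc ▸ mem_range_self i with h | ⟨g, hg, h⟩
    exacts [h ▸ hr, h ▸ hbaseR g hg]
  · have hG₀xy : ∀ g ∈ G₀, (x, x) ∈ g ↔ (x, y) ∈ g := by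
      intro g hg
      obtain ⟨i, hi⟩ : base g ∈ range c := hc ▸ mem_insert_of_mem _ (mem_image_of_mem base hg)
      have hsep : x ∈ base g ↔ y ∈ base g := hi ▸ hxy i
      rcases hbase g hg with h | h <;> rw [h] <;> simp [hsep]
    simpa using forall_generateFrom_mem_iff_mem_iff.2 hG₀xy _ hΔ₀

theorem MeasureTheory.Measure.ext_of_conull_of_measurable_val {β : Type*}
    {m mH : MeasurableSpace β} {μ ν : Measure[m] β} {G : Set β} (hμ : μ Gᶜ = 0) (hν : ν Gᶜ = 0)
    (hval : Measurable[MeasurableSpace.comap Subtype.val mH, m] (Subtype.val : G → β))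
    (heq : ∀ D, MeasurableSet[mH] D → μ D = ν D) : μ = ν := by
  refine @Measure.ext _ m _ _ fun C hC => ?_
  obtain ⟨D, hD, hDC⟩ := measurableSet_comap.1 (hval hC)
  have hDG : D ∩ G = C ∩ G := by
    rw [inter_comm D, inter_comm C]
    exact Subtype.preimage_coe_eq_preimage_coe_iff.1 hDC
  calc μ C = μ D := by rw [← measure_inter_conull hμ, ← hDG, measure_inter_conull hμ]
    _ = ν D := heq D hD
    _ = ν C := by rw [← measure_inter_conull hν, hDG, measure_inter_conull hν]

section Dissection

variable {S : Type*} (c : ℕ → Set S)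

def dissectionCode (m : ℕ) (x : S) : Set (Fin m) := {i | x ∈ c i}

variable {c}

theorem exists_injOn_dissectionCode (hsep : ∀ x y, (∀ i, x ∈ c i ↔ y ∈ c i) → x = y)
    {t : Set S} (ht : t.Finite) : ∃ m, InjOn (dissectionCode c m) t := by
  have hidx : ∀ p : S × S, p.1 ≠ p.2 → ∃ i, ¬(p.1 ∈ c i ↔ p.2 ∈ c i) := fun p hp => by
    by_contra! h
    exact hp (hsep _ _ h)
  choose! idx hidx using hidx
  obtain ⟨N, hN⟩ := ((ht.prod ht).image idx).bddAbove
  refine ⟨N + 1, fun x hx y hy hxy => by_contra fun hne => hidx (x, y) hne ?_⟩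
  have hlt : idx (x, y) < N + 1 := Nat.lt_succ_of_le (hN ⟨(x, y), ⟨hx, hy⟩, rfl⟩)
  exact Set.ext_iff.1 hxy ⟨idx (x, y), hlt⟩

theorem natCast_le_encard_iff_exists_dissectionCode
    (hsep : ∀ x y, (∀ i, x ∈ c i ↔ y ∈ c i) → x = y) (s : Set S) (k : ℕ) :
    (k : ℕ∞) ≤ s.encard ↔ ∃ m, (k : ℕ∞) ≤ (dissectionCode c m '' s).encard := by
  refine ⟨fun hk => ?_, fun ⟨m, hm⟩ => hm.trans (encard_image_le _ s)⟩
  obtain ⟨t, hts, htk⟩ := exists_subset_encard_eq hk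
  obtain ⟨m, hm⟩ := exists_injOn_dissectionCode hsep (finite_of_encard_eq_coe htk)
  exact ⟨m, htk ▸ hm.encard_image ▸ encard_le_encard (image_mono hts)⟩

theorem MeasureTheory.IsSetRing.inter_dissectionCode_preimage_mem {R : Set (Set S)}
    (hR : IsSetRing R) (hc : ∀ i, c i ∈ R) {A : Set S} (hA : A ∈ R) {m : ℕ} (σ : Set (Fin m)) :
    A ∩ dissectionCode c m ⁻¹' {σ} ∈ R := by
  classical
  let bad : Fin m → Set S := fun i => if i ∈ σ then A \ c i else A ∩ c i
  have hbad : ∀ i ∈ Finset.univ, bad i ∈ R := fun i _ => by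
    by_cases hi : i ∈ σ
    · simpa [bad, hi] using hR.sdiff_mem hA (hc i)
    · simpa [bad, hi] using hR.inter_mem hA (hc i)
  have hgood : ∀ x ∈ A, ∀ i, x ∉ bad i ↔ (x ∈ c i ↔ i ∈ σ) := fun x hx i => by
    by_cases hσ : i ∈ σ <;> simp [bad, hσ, hx]
  have hcell : A ∩ dissectionCode c m ⁻¹' {σ} = A \ ⋃ i ∈ Finset.univ, bad i := by
    ext x
    by_cases hx : x ∈ A
    · simp only [Set.mem_inter_iff, mem_preimage, mem_singleton_iff, Set.mem_sdiff, mem_iUnion,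
        Finset.mem_univ, exists_true_left, not_exists, hgood x hx, Set.ext_iff]
      rfl
    · simp [hx]
  exact hcell ▸ hR.sdiff_mem hA (hR.biUnion_mem _ hbad)

end Dissection

section CountableSets

variable {S : Type*}

theorem measurable_NA_hitOrMiss {R : Set (Set S)} (hR : IsSetRing R) {c : ℕ → Set S}
    (hc : ∀ i, c i ∈ R) (hsep : ∀ x y, (∀ i, x ∈ c i ↔ y ∈ c i) → x = y) {A : Set S}
    (hA : A ∈ R) : Measurable[hitOrMiss R] (NA A) := by
  let _ : MeasurableSpace (CS S) := hitOrMiss R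
  refine ENat.measurable_of_measurableSet_le fun k => ?_
  simp_rw [NA, natCast_le_encard_iff_exists_dissectionCode hsep, ofPred_exists]
  refine .iUnion fun m => (measurable_encard.comp ?_) (.of_discrete (s := Ici (k : ℕ∞)))
  refine measurable_set_iff.2 fun σ => measurableSet_setOfPred.1 ?_
  have hhit : {M : CS S | σ ∈ dissectionCode c m '' (M.1 ∩ A)}
      = {M : CS S | (M.1 ∩ (A ∩ dissectionCode c m ⁻¹' {σ})).Nonempty} := by
    ext M
    simp [Set.Nonempty, and_assoc]
  exact hhit ▸ measurableSet_generateFrom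
    ⟨_, hR.inter_dissectionCode_preimage_mem hc hA σ, rfl⟩

theorem measurable_countingSigma_iff {β : Type*} {mβ : MeasurableSpace β} {T : Set (Set S)}
    {f : β → CS S} :
    Measurable[mβ, countingSigma T] f ↔ ∀ A ∈ T, Measurable[mβ] fun b => NA A (f b) := by
  simp_rw [measurable_iff_comap_le, countingSigma, MeasurableSpace.comap_iSup, iSup₂_le_iff,
    comap_comp]
  rfl

theorem hitOrMiss_le_countingSigma {E T : Set (Set S)} (hET : E ⊆ T) :
    hitOrMiss E ≤ countingSigma T := by
  refine generateFrom_le ?_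
  rintro _ ⟨A, hA, rfl⟩
  have hNA : Measurable[countingSigma T] (NA A) :=
    measurable_iff_comap_le.2 (le_iSup₂_of_le A (hET hA) le_rfl)
  have hhit : {M : CS S | (M.1 ∩ A).Nonempty} = NA A ⁻¹' {0}ᶜ := by
    ext M
    simp [NA, nonempty_iff_ne_empty]
  change MeasurableSet[countingSigma T] {M : CS S | (M.1 ∩ A).Nonempty}
  exact hhit ▸ hNA (measurableSet_singleton 0).compl

def locallyFinite (A : ℕ → Set S) : Set (CS S) := {M | ∀ n, (M.1 ∩ A n).Finite}

theorem measurable_NA_comp_val_locallyFinite [MeasurableSpace S] {R : Set (Set S)}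
    (hR : IsSetRing R) (hgen : generateFrom R = ‹MeasurableSpace S›)
    {mH : MeasurableSpace (CS S)} (hNA : ∀ B ∈ R, Measurable[mH] (NA B))
    {A : ℕ → Set S} (hAR : ∀ n, A n ∈ R) (hAcov : ⋃ n, A n = univ) {B : Set S}
    (hB : MeasurableSet B) :
    Measurable[MeasurableSpace.comap Subtype.val mH] fun M : locallyFinite A => NA B M.1 := by
  let _ : MeasurableSpace (locallyFinite A) := MeasurableSpace.comap Subtype.val mH
  have hval : Measurable[_, mH] (Subtype.val : locallyFinite A → CS S) :=
    measurable_iff_comap_le.2 le_rfl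
  have hexhaust : ∀ M : locallyFinite A,
      NA B M.1 = (⋃ n, M.1.1 ∩ accumulate A n ∩ B).encard := fun M => by
    rw [← iUnion_inter, ← inter_iUnion, iUnion_accumulate, hAcov, inter_univ, NA]
  simp_rw [hexhaust]
  refine measurable_encard_iUnion_of_monotone (fun M _ _ hmn => inter_subset_inter_left _
    (inter_subset_inter_right _ (monotone_accumulate hmn))) fun n => ?_
  have hfin : ∀ M : locallyFinite A, (M.1.1 ∩ accumulate A n).Finite := fun M => by
    rw [accumulate_def, inter_iUnion₂]
    exact (finite_le_nat n).biUnion fun k _ => M.2 k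
  refine measurable_encard_inter_of_isPiSystem hgen hR.isSetSemiring.isPiSystem hfin
    ((hNA _ (hR.accumulate_mem hAR n)).comp hval) (fun C hC => ?_) hB
  simp_rw [inter_assoc]
  exact (hNA _ (hR.inter_mem (hR.accumulate_mem hAR n) hC)).comp hval

theorem measurableSet_locallyFinite {mH : MeasurableSpace (CS S)} {A : ℕ → Set S}
    (hNA : ∀ n, Measurable[mH] (NA (A n))) : MeasurableSet[mH] (locallyFinite A) := by
  have hG : locallyFinite A = ⋂ n, NA (A n) ⁻¹' {⊤}ᶜ := by
    ext M
    simp [locallyFinite, NA]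
  exact hG ▸ .iInter fun n => hNA n (measurableSet_singleton ⊤).compl

theorem measure_eq_of_measurableSet_hitOrMiss [m : MeasurableSpace (CS S)] {R : Set (Set S)}
    (hR : ∀ A ∈ R, ∀ B ∈ R, A ∪ B ∈ R) (hle : hitOrMiss R ≤ m) {μ ν : Measure (CS S)}
    [IsFiniteMeasure μ] (huniv : μ univ = ν univ)
    (hhit : ∀ A ∈ R, μ {M | (M.1 ∩ A).Nonempty} = ν {M | (M.1 ∩ A).Nonempty}) {D : Set (CS S)}
    (hD : MeasurableSet[hitOrMiss R] D) : μ D = ν D := by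
  have hmiss : ∀ A, {M : CS S | M.1 ∩ A = ∅} = {M : CS S | (M.1 ∩ A).Nonempty}ᶜ := fun A => by
    ext M
    simp [nonempty_iff_ne_empty]
  have hgen : hitOrMiss R = generateFrom ((fun A => {M : CS S | M.1 ∩ A = ∅}) '' R) := by
    refine le_antisymm (generateFrom_le ?_) (generateFrom_le ?_) <;> rintro _ ⟨A, hA, rfl⟩
    · show MeasurableSet[generateFrom ((fun A => {M : CS S | M.1 ∩ A = ∅}) '' R)]
        {M : CS S | (M.1 ∩ A).Nonempty}
      rw [← compl_compl {M : CS S | (M.1 ∩ A).Nonempty}, ← hmiss]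
      exact (measurableSet_generateFrom (mem_image_of_mem _ hA)).compl
    · show MeasurableSet[hitOrMiss R] {M : CS S | M.1 ∩ A = ∅}
      rw [hmiss]
      exact (measurableSet_generateFrom (mem_image_of_mem _ hA)).compl
  have hpi : IsPiSystem ((fun A => {M : CS S | M.1 ∩ A = ∅}) '' R) := by
    rintro _ ⟨A, hA, rfl⟩ _ ⟨B, hB, rfl⟩ _
    exact ⟨A ∪ B, hR A hA B hB, by ext M; simp [inter_union_distrib_left]⟩
  have htrim : μ.trim hle = ν.trim hle := by
    refine ext_of_generate_finite _ hgen hpi ?_ ?_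
    · rintro _ ⟨A, hA, rfl⟩
      have hmissA : MeasurableSet[hitOrMiss R] {M : CS S | M.1 ∩ A = ∅} :=
        hgen ▸ measurableSet_generateFrom ⟨A, hA, rfl⟩
      have hhitA : MeasurableSet {M : CS S | (M.1 ∩ A).Nonempty} :=
        hle _ (measurableSet_generateFrom ⟨A, hA, rfl⟩)
      rw [trim_measurableSet_eq hle hmissA, trim_measurableSet_eq hle hmissA, hmiss,
        measure_compl hhitA (measure_ne_top μ _),
        measure_compl hhitA (hhit A hA ▸ measure_ne_top μ _), huniv, hhit A hA]
    · rw [trim_measurableSet_eq hle .univ, trim_measurableSet_eq hle .univ, huniv]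
  rw [← trim_measurableSet_eq hle hD, htrim, trim_measurableSet_eq hle hD]

end CountableSets

theorem uniqueness_ring_hitting {Ω S : Type*}
    [MeasurableSpace Ω] [MeasurableSpace S]
    (hΔ : MeasurableSet {p : S × S | p.1 = p.2})
    (P : Measure Ω) [IsProbabilityMeasure P]
    (R : Set (Set S)) (hR : MeasureTheory.IsSetRing R)
    (hRmeas : ∀ A ∈ R, MeasurableSet A)
    (hgen : MeasurableSpace.generateFrom R = ‹MeasurableSpace S›)
    (π₁ π₂ : Ω → CS S)
    (hm₁ : @Measurable Ω (CS S) _ (countingSigmaField S) π₁)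
    (hm₂ : @Measurable Ω (CS S) _ (countingSigmaField S) π₂)
    (h : ∀ A ∈ R, P {ω | ((π₁ ω).1 ∩ A).Nonempty} = P {ω | ((π₂ ω).1 ∩ A).Nonempty})
    (hsf₁ : ∃ A : ℕ → Set S, (∀ n, A n ∈ R) ∧ (⋃ n, A n) = Set.univ ∧
      ∀ ω n, ((π₁ ω).1 ∩ A n).Finite) :
    @Measure.map Ω (CS S) _ (countingSigmaField S) π₁ P =
      @Measure.map Ω (CS S) _ (countingSigmaField S) π₂ P := by
  let _ : MeasurableSpace (CS S) := countingSigmaField S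
  obtain ⟨c, hcR, hsep⟩ :=
    exists_seq_separating_of_measurableSet_diagonal hgen ⟨∅, hR.empty_mem⟩ hΔ
  obtain ⟨A, hAR, hAcov, hAfin⟩ := hsf₁
  have hle : hitOrMiss R ≤ countingSigmaField S := hitOrMiss_le_countingSigma hRmeas
  have hNA : ∀ B ∈ R, Measurable[hitOrMiss R] (NA B) :=
    fun B hB => measurable_NA_hitOrMiss hR hcR hsep hB
  have hlaw : ∀ D, MeasurableSet[hitOrMiss R] D → P.map π₁ D = P.map π₂ D :=
    fun D => measure_eq_of_measurableSet_hitOrMiss (fun _ hA _ hB => hR.union_mem hA hB) hle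
      (by simp [Measure.map_apply hm₁ .univ, Measure.map_apply hm₂ .univ])
      (fun B hB => by
        rw [Measure.map_apply hm₁ (hle _ (measurableSet_generateFrom (mem_image_of_mem _ hB))),
          Measure.map_apply hm₂ (hle _ (measurableSet_generateFrom (mem_image_of_mem _ hB)))]
        exact h B hB)
  have hG := measurableSet_locallyFinite fun n => hNA _ (hAR n)
  have hG₁ : P.map π₁ (locallyFinite A)ᶜ = 0 := by
    rw [Measure.map_apply hm₁ (hle _ hG.compl)]
    simp [locallyFinite, hAfin]
  have hG₂ : P.map π₂ (locallyFinite A)ᶜ = 0 := hlaw _ hG.compl ▸ hG₁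
  exact Measure.ext_of_conull_of_measurable_val hG₁ hG₂
    (measurable_countingSigma_iff.2 fun B hB =>
      measurable_NA_comp_val_locallyFinite hR hgen hNA hAR hAcov hB) hlaw
end
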